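/- Let α > 0, n = 2, θ₁ ≤ θ₂ and η₁ ≤ η₂ positive, θ₁θ₂ < η₁η₂, θ₂ > η₂, and define u* = (θ₂η₁ - η₂θ₁)/(θ₂ - θ₁ - η₂ + η₁). Define H_θ(u) = P(θ₁W₁ + θ₂W₂ ≤ u) with W₂ ~ Beta(α,α) and W₁ = 1 - W₂ (and similarly H_η). Then θ₁ < η₁ ≤ η₂ < θ₂, η₁ ≤ u* ≤ η₂, and H_θ(u) - H_η(u) is > 0 for θ₁ < u < u*, < 0 for u* < u < θ₂, and = 0 for u ≤ θ₁ or u ≥ θ₂. -/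

import Mathlib

open MeasureTheory Real Set

/-- The Beta(α,α) measure on ℝ. -/
noncomputable def betaMeas (α : ℝ) : Measure ℝ :=
  volume.withDensity (fun w => ENNReal.ofReal
    (Set.indicator (Set.Ioo (0:ℝ) 1)
      (fun w => w ^ (α - 1) * (1 - w) ^ (α - 1) *
        (Real.Gamma (2 * α) / (Real.Gamma α * Real.Gamma α))) w))

-- density function
noncomputable def betaG (α : ℝ) (w : ℝ) : ℝ :=
  w ^ (α - 1) * (1 - w) ^ (α - 1) * (Real.Gamma (2 * α) / (Real.Gamma α * Real.Gamma α))

lemma betaG_meas (α : ℝ) : Measurable (betaG α) := by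
  unfold betaG
  fun_prop

lemma betaG_pos {α : ℝ} (hα : 0 < α) {w : ℝ} (hw : w ∈ Set.Ioo (0:ℝ) 1) : 0 < betaG α w := by
  have h1 : (0:ℝ) < w ^ (α - 1) := Real.rpow_pos_of_pos hw.1 _
  have h2 : (0:ℝ) < (1 - w) ^ (α - 1) := Real.rpow_pos_of_pos (by linarith [hw.2]) _
  have h3 : (0:ℝ) < Real.Gamma (2 * α) / (Real.Gamma α * Real.Gamma α) := by
    apply div_pos (Real.Gamma_pos_of_pos (by linarith)) 
      (mul_pos (Real.Gamma_pos_of_pos hα) (Real.Gamma_pos_of_pos hα))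
  exact mul_pos (mul_pos h1 h2) h3

lemma betaMeas_apply (α : ℝ) {S : Set ℝ} (hS : MeasurableSet S) :
    betaMeas α S = ∫⁻ w in S ∩ Set.Ioo (0:ℝ) 1, ENNReal.ofReal (betaG α w) := by
  rw [betaMeas, withDensity_apply _ hS]
  have : ∀ w, ENNReal.ofReal ((Set.Ioo (0:ℝ) 1).indicator
      (fun w => w ^ (α - 1) * (1 - w) ^ (α - 1) *
        (Real.Gamma (2 * α) / (Real.Gamma α * Real.Gamma α))) w)
      = (Set.Ioo (0:ℝ) 1).indicator (fun w => ENNReal.ofReal (betaG α w)) w := by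
    intro w
    by_cases h : w ∈ Set.Ioo (0:ℝ) 1 <;> simp [h, betaG]
  simp_rw [this]
  rw [lintegral_indicator measurableSet_Ioo _, Measure.restrict_restrict measurableSet_Ioo,
    Set.inter_comm]

lemma betaG_integrable {α : ℝ} (hα : 0 < α) :
    IntegrableOn (betaG α) (Set.Ioo (0:ℝ) 1) := by
  have hc : IntervalIntegrable (fun x : ℝ => (x:ℂ) ^ ((α:ℂ) - 1) * ((1:ℂ) - x) ^ ((α:ℂ) - 1))
      volume 0 1 := Complex.betaIntegral_convergent (by simpa) (by simpa)
  have h1 : IntegrableOn (fun x : ℝ => (x:ℂ) ^ ((α:ℂ) - 1) * ((1:ℂ) - x) ^ ((α:ℂ) - 1))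
      (Set.Ioc (0:ℝ) 1) := by
    rwa [intervalIntegrable_iff_integrableOn_Ioc_of_le (by norm_num)] at hc
  have h2 : IntegrableOn (fun x : ℝ => ‖(x:ℂ) ^ ((α:ℂ) - 1) * ((1:ℂ) - x) ^ ((α:ℂ) - 1)‖)
      (Set.Ioo (0:ℝ) 1) := IntegrableOn.mono_set h1.norm Set.Ioo_subset_Ioc_self
  have h3 : IntegrableOn (fun x : ℝ => x ^ (α - 1) * (1 - x) ^ (α - 1)) (Set.Ioo (0:ℝ) 1) := by
    apply h2.congr_fun ?_ measurableSet_Ioo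
    intro x hx
    have hx0 : (0:ℝ) < x := hx.1
    have hx1 : (0:ℝ) < 1 - x := by linarith [hx.2]
    simp only []
    rw [norm_mul,
      Complex.norm_cpow_eq_rpow_re_of_pos (by exact_mod_cast hx0),
      show ((1:ℂ) - (x:ℂ)) = ((1 - x : ℝ) : ℂ) by push_cast; ring,
      Complex.norm_cpow_eq_rpow_re_of_pos (by exact_mod_cast hx1)]
    simp
  exact h3.mul_const _

lemma betaMeas_lt_top {α : ℝ} (hα : 0 < α) (S : Set ℝ) : betaMeas α S < ⊤ := by
  refine lt_of_le_of_lt (measure_mono (Set.subset_univ S)) ?_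
  rw [betaMeas_apply α MeasurableSet.univ, Set.univ_inter]
  exact (betaG_integrable hα).setLIntegral_lt_top

lemma betaMeas_pos {α : ℝ} (hα : 0 < α) {S : Set ℝ} (hS : MeasurableSet S)
    (hvol : 0 < volume (S ∩ Set.Ioo (0:ℝ) 1)) : 0 < betaMeas α S := by
  rw [betaMeas_apply α hS]
  rw [setLIntegral_pos_iff ((betaG_meas α).ennreal_ofReal)]
  have hsupp : (Function.support fun w => ENNReal.ofReal (betaG α w)) ∩ (S ∩ Set.Ioo 0 1)
      = S ∩ Set.Ioo 0 1 := by
    apply Set.inter_eq_self_of_subset_right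
    intro w hw
    simp only [Function.mem_support, ne_eq, ENNReal.ofReal_eq_zero, not_le]
    exact betaG_pos hα hw.2
  rw [hsupp]
  exact hvol

lemma betaMeas_zero_of_disjoint {α : ℝ} {S : Set ℝ} (hS : MeasurableSet S)
    (h : S ∩ Set.Ioo (0:ℝ) 1 = ∅) : betaMeas α S = 0 := by
  rw [betaMeas_apply α hS, h]
  simp

lemma betaMeas_eq_univ_of_subset {α : ℝ} {S : Set ℝ} (hS : MeasurableSet S)
    (h : Set.Ioo (0:ℝ) 1 ⊆ S) : betaMeas α S = betaMeas α Set.univ := by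
  rw [betaMeas_apply α hS, betaMeas_apply α MeasurableSet.univ, Set.univ_inter,
    Set.inter_eq_self_of_subset_right h]

/-- `H_θ(u) = P(θ₁ W₁ + θ₂ W₂ ≤ u)` with `W₁ = 1 - W₂ ~ Beta(α,α)`. -/
noncomputable def Hfun (α θ₁ θ₂ : ℝ) (u : ℝ) : ℝ :=
  ((betaMeas α) {w | θ₁ * w + θ₂ * (1 - w) ≤ u}).toReal

lemma Sset_meas (a b u : ℝ) : MeasurableSet {w : ℝ | a * w + b * (1 - w) ≤ u} :=
  measurableSet_le (by fun_prop) measurable_const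

lemma Sset_eq_Ici {a b u : ℝ} (hab : a < b) :
    {w : ℝ | a * w + b * (1 - w) ≤ u} = Set.Ici ((b - u) / (b - a)) := by
  ext w
  simp only [Set.mem_setOf_eq, Set.mem_Ici]
  rw [div_le_iff₀ (by linarith)]
  constructor <;> intro h <;> nlinarith

lemma H_lt {α : ℝ} (hα : 0 < α) {S T : Set ℝ} (hSm : MeasurableSet S) (hTm : MeasurableSet T)
    (hsub : S ⊆ T) (hvol : 0 < volume ((T \ S) ∩ Set.Ioo (0:ℝ) 1)) :
    (betaMeas α S).toReal < (betaMeas α T).toReal := by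
  have h1 : betaMeas α S < betaMeas α T := by
    calc betaMeas α S < betaMeas α S + betaMeas α (T \ S) :=
          ENNReal.lt_add_right (betaMeas_lt_top hα S).ne
            (betaMeas_pos hα (hTm.diff hSm) hvol).ne'
      _ = betaMeas α T := by
          rw [← measure_union disjoint_sdiff_right (hTm.diff hSm), Set.union_diff_cancel hsub]
  exact (ENNReal.toReal_lt_toReal (betaMeas_lt_top hα S).ne (betaMeas_lt_top hα T).ne).mpr h1


theorem stmt_13 (α : ℝ) (hα : 0 < α) (θ₁ θ₂ η₁ η₂ : ℝ)
    (hθ₁ : 0 < θ₁) (hη₁ : 0 < η₁) (hθ : θ₁ ≤ θ₂) (hη : η₁ ≤ η₂)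
    (hprod : θ₁ * θ₂ < η₁ * η₂) (htop : η₂ < θ₂)
    (ustar : ℝ) (hu : ustar = (θ₂ * η₁ - η₂ * θ₁) / (θ₂ - θ₁ - η₂ + η₁)) :
    θ₁ < η₁ ∧ η₁ ≤ ustar ∧ ustar ≤ η₂ ∧
    (∀ u : ℝ, θ₁ < u → u < ustar → Hfun α θ₁ θ₂ u - Hfun α η₁ η₂ u > 0) ∧
    (∀ u : ℝ, ustar < u → u < θ₂ → Hfun α θ₁ θ₂ u - Hfun α η₁ η₂ u < 0) ∧
    (∀ u : ℝ, u ≤ θ₁ ∨ θ₂ ≤ u → Hfun α θ₁ θ₂ u - Hfun α η₁ η₂ u = 0) := by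
  have hθ₂pos : 0 < θ₂ := lt_of_lt_of_le hθ₁ hθ
  have hA : θ₁ < η₁ := by nlinarith
  have hθlt : θ₁ < θ₂ := by linarith
  have hD : 0 < θ₂ - θ₁ - η₂ + η₁ := by linarith
  have hust₁ : η₁ ≤ ustar := by
    rw [hu, le_div_iff₀ hD]; nlinarith
  have hust₂ : ustar ≤ η₂ := by
    rw [hu, div_le_iff₀ hD]; nlinarith
  refine ⟨hA, hust₁, hust₂, ?_, ?_, ?_⟩
  · -- positive part
    intro u hu1 hu2
    have hu2' : u < θ₂ := by linarith
    have hkey : u * (θ₂ - θ₁ - η₂ + η₁) < θ₂ * η₁ - η₂ * θ₁ := by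
      rw [hu, lt_div_iff₀ hD] at hu2; linarith
    set tθ := (θ₂ - u) / (θ₂ - θ₁) with htθ
    have htθ0 : 0 < tθ := div_pos (by linarith) (by linarith)
    have htθ1 : tθ < 1 := by rw [div_lt_one (by linarith)]; linarith
    unfold Hfun
    refine sub_pos.mpr (H_lt hα (Sset_meas η₁ η₂ u) (Sset_meas θ₁ θ₂ u) ?_ ?_)
    · -- Sη ⊆ Sθ
      rcases eq_or_lt_of_le hη with heq | hηlt
      · intro w hw
        exfalso
        simp only [Set.mem_setOf_eq] at hw
        have hval : η₁ * w + η₂ * (1 - w) = η₁ := by rw [heq]; ring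
        linarith
      · rw [Sset_eq_Ici hθlt, Sset_eq_Ici hηlt]
        apply Set.Ici_subset_Ici.mpr
        rw [div_le_div_iff₀ (by linarith) (by linarith)]
        nlinarith
    · rcases eq_or_lt_of_le hη with heq | hηlt
      · -- Sη = ∅, diff ⊇ Ioo tθ 1
        refine lt_of_lt_of_le (b := volume (Set.Ioo tθ 1)) ?_ (measure_mono ?_)
        · rw [Real.volume_Ioo, ENNReal.ofReal_pos]; linarith
        · intro w hw
          refine ⟨⟨?_, ?_⟩, by linarith [hw.1], hw.2⟩
          · rw [Sset_eq_Ici hθlt]; exact le_of_lt hw.1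
          · simp only [Set.mem_setOf_eq]
            intro hcon
            nlinarith [hw.1, hw.2]
      · set tη := (η₂ - u) / (η₂ - η₁) with htη
        have htηθ : tθ < tη := by
          rw [htθ, htη, div_lt_div_iff₀ (by linarith) (by linarith)]
          nlinarith
        refine lt_of_lt_of_le (b := volume (Set.Ioo tθ (min tη 1))) ?_ (measure_mono ?_)
        · rw [Real.volume_Ioo, ENNReal.ofReal_pos]
          have : tθ < min tη 1 := lt_min htηθ htθ1
          linarith
        · intro w hw
          have hw1 := hw.1
          have hw2 := hw.2
          have hwη : w < tη := lt_of_lt_of_le hw2 (min_le_left _ _)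
          have hw1' : w < 1 := lt_of_lt_of_le hw2 (min_le_right _ _)
          refine ⟨⟨?_, ?_⟩, by linarith, hw1'⟩
          · rw [Sset_eq_Ici hθlt]; exact le_of_lt hw1
          · rw [Sset_eq_Ici hηlt]; simp only [Set.mem_Ici, not_le]; exact hwη
  · -- negative part
    intro u hu1 hu2
    have hu1' : θ₁ < u := by linarith
    have hkey : θ₂ * η₁ - η₂ * θ₁ < u * (θ₂ - θ₁ - η₂ + η₁) := by
      rw [hu, div_lt_iff₀ hD] at hu1; linarith
    set tθ := (θ₂ - u) / (θ₂ - θ₁) with htθ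
    have htθ0 : 0 < tθ := div_pos (by linarith) (by linarith)
    have htθ1 : tθ < 1 := by rw [div_lt_one (by linarith)]; linarith
    unfold Hfun
    refine sub_neg.mpr (H_lt hα (Sset_meas θ₁ θ₂ u) (Sset_meas η₁ η₂ u) ?_ ?_)
    · -- Sθ ⊆ Sη
      rcases eq_or_lt_of_le hη with heq | hηlt
      · intro w _
        simp only [Set.mem_setOf_eq]
        have hval : η₁ * w + η₂ * (1 - w) = η₁ := by rw [heq]; ring
        linarith
      · rw [Sset_eq_Ici hθlt, Sset_eq_Ici hηlt]
        apply Set.Ici_subset_Ici.mpr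
        rw [div_le_div_iff₀ (by linarith) (by linarith)]
        nlinarith
    · rcases eq_or_lt_of_le hη with heq | hηlt
      · refine lt_of_lt_of_le (b := volume (Set.Ioo 0 tθ)) ?_ (measure_mono ?_)
        · rw [Real.volume_Ioo, ENNReal.ofReal_pos]; linarith
        · intro w hw
          refine ⟨⟨?_, ?_⟩, hw.1, by linarith [hw.2]⟩
          · simp only [Set.mem_setOf_eq]
            have hval : η₁ * w + η₂ * (1 - w) = η₁ := by rw [heq]; ring
            linarith
          · rw [Sset_eq_Ici hθlt]; simp only [Set.mem_Ici, not_le]; exact hw.2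
      · set tη := (η₂ - u) / (η₂ - η₁) with htη
        have htη1 : tη < 1 := by
          rw [htη, div_lt_one (by linarith)]
          have : η₁ < u := by linarith
          linarith
        have htηθ : tη < tθ := by
          rw [htθ, htη, div_lt_div_iff₀ (by linarith) (by linarith)]
          nlinarith
        refine lt_of_lt_of_le (b := volume (Set.Ioo (max tη 0) tθ)) ?_ (measure_mono ?_)
        · rw [Real.volume_Ioo, ENNReal.ofReal_pos]
          have : max tη 0 < tθ := max_lt htηθ htθ0
          linarith
        · intro w hw
          have hwη : tη < w := lt_of_le_of_lt (le_max_left _ _) hw.1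
          have hw0 : 0 < w := lt_of_le_of_lt (le_max_right _ _) hw.1
          refine ⟨⟨?_, ?_⟩, hw0, by linarith [hw.2]⟩
          · rw [Sset_eq_Ici hηlt]; exact le_of_lt hwη
          · rw [Sset_eq_Ici hθlt]; simp only [Set.mem_Ici, not_le]; exact hw.2
  · -- zero part
    intro u hcase
    rcases hcase with h | h
    · have h1 : {w : ℝ | θ₁ * w + θ₂ * (1 - w) ≤ u} ∩ Set.Ioo (0:ℝ) 1 = ∅ := by
        apply Set.eq_empty_iff_forall_notMem.mpr
        rintro w ⟨hw1, hw2⟩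
        simp only [Set.mem_setOf_eq] at hw1
        simp only [Set.mem_Ioo] at hw2
        linarith [mul_pos (sub_pos.mpr hθlt) (sub_pos.mpr hw2.2)]
      have h2 : {w : ℝ | η₁ * w + η₂ * (1 - w) ≤ u} ∩ Set.Ioo (0:ℝ) 1 = ∅ := by
        apply Set.eq_empty_iff_forall_notMem.mpr
        rintro w ⟨hw1, hw2⟩
        simp only [Set.mem_setOf_eq] at hw1
        simp only [Set.mem_Ioo] at hw2
        linarith [mul_nonneg (sub_nonneg.mpr hη) (by linarith [hw2.2] : (0:ℝ) ≤ 1 - w)]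
      unfold Hfun
      rw [betaMeas_zero_of_disjoint (Sset_meas θ₁ θ₂ u) h1,
        betaMeas_zero_of_disjoint (Sset_meas η₁ η₂ u) h2]
      simp
    · have h1 : Set.Ioo (0:ℝ) 1 ⊆ {w : ℝ | θ₁ * w + θ₂ * (1 - w) ≤ u} := by
        intro w hw
        simp only [Set.mem_Ioo] at hw
        simp only [Set.mem_setOf_eq]
        linarith [mul_pos (sub_pos.mpr hθlt) hw.1]
      have h2 : Set.Ioo (0:ℝ) 1 ⊆ {w : ℝ | η₁ * w + η₂ * (1 - w) ≤ u} := by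
        intro w hw
        simp only [Set.mem_Ioo] at hw
        simp only [Set.mem_setOf_eq]
        linarith [mul_nonneg (sub_nonneg.mpr hη) hw.1.le]
      unfold Hfun
      rw [betaMeas_eq_univ_of_subset (Sset_meas θ₁ θ₂ u) h1,
        betaMeas_eq_univ_of_subset (Sset_meas η₁ η₂ u) h2]
      ring
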